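/- Let V : [0,∞) → [0,∞) be a differentiable function satisfying V'(t) ≤ -η_1 V(t) - η_2 V(t)^{(1+h)/2} + η_3 for all t ≥ 0, where η_1 > 0, η_2 > 0, η_3 > 0, and 0 < h < 1. Then for any κ ∈ (0,1), there exists a finite time T ≥ 0 such that for all t ≥ T, V(t) ≤ min{ 2η_3/((1-κ)η_1) , 2 (η_3/((1-κ)η_2))^{2/(1+h)} } / 2, i.e., V(t) ≤ min{ η_3/((1-κ)η_1) , (η_3/((1-κ)η_2))^{2/(1+h)} }. -/

import Mathlib

/-!
Set `K = η₃ / (1 - κ)`. As soon as `V` reaches the threshold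
`B = min (K / η₁) ((K / η₂) ^ (2 / (1 + h)))`, one of the two dissipation terms alone is at least
`K`, so `V' ≤ η₃ - K = -κ η₃ / (1 - κ) < 0`.
Hence `V` decreases at a uniform linear rate while it is above `B`, reaches `B` in finite time,
and can never cross `B` upwards afterwards.
-/

open Set

lemma le_mul_add_mul_rpow_of_min_le {a b K v p : ℝ} (ha : 0 < a) (hb : 0 < b) (hK : 0 ≤ K)
    (hp : 0 < p) (hv : min (K / a) ((K / b) ^ p⁻¹) ≤ v) : K ≤ a * v + b * v ^ p := by
  have hKb : 0 ≤ K / b := div_nonneg hK hb.le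
  have hv0 : 0 ≤ v := (le_min (div_nonneg hK ha.le) (Real.rpow_nonneg hKb _)).trans hv
  rcases min_le_iff.mp hv with hv | hv
  · have : K ≤ a * v := (div_le_iff₀' ha).mp hv
    have : 0 ≤ b * v ^ p := mul_nonneg hb.le (Real.rpow_nonneg hv0 p)
    linarith
  · have : K ≤ b * v ^ p := (div_le_iff₀' hb).mp ((Real.rpow_inv_le_iff_of_pos hKb hv0 hp).mp hv)
    nlinarith

section Fencing

variable {f : ℝ → ℝ} {a B : ℝ}

lemma exists_le_of_deriv_le_neg {c : ℝ} (hf : ∀ x ≥ a, DifferentiableAt ℝ f x) (hc : 0 < c)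
    (hderiv : ∀ x ≥ a, B < f x → deriv f x ≤ -c) : ∃ T ≥ a, f T ≤ B := by
  by_contra! habove
  set y := a + (f a - B) / c
  have hay : a ≤ y :=
    le_add_of_nonneg_right (div_nonneg (sub_nonneg.mpr (habove a le_rfl).le) hc.le)
  have hdecay : f y - f a ≤ -c * (y - a) :=
    (convex_Ici a).image_sub_le_mul_sub_of_deriv_le
      (fun x hx => (hf x hx).continuousAt.continuousWithinAt)
      (fun x hx => (hf x (interior_subset hx)).differentiableWithinAt)
      (fun x hx => hderiv x (interior_subset hx) (habove x (interior_subset hx)))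
      a self_mem_Ici y hay hay
  have : -c * (y - a) = B - f a := by simp only [y]; field_simp; ring
  linarith [habove y hay]

lemma le_of_deriv_neg_of_eq (hf : ∀ x ≥ a, DifferentiableAt ℝ f x) (ha : f a ≤ B)
    (hderiv : ∀ x ≥ a, f x = B → deriv f x < 0) : ∀ x ≥ a, f x ≤ B := fun _ hx =>
  image_le_of_deriv_right_lt_deriv_boundary (B' := fun _ => 0)
    (fun y hy => (hf y hy.1).continuousAt.continuousWithinAt)
    (fun y hy => (hf y hy.1).hasDerivAt.hasDerivWithinAt) ha (fun _ => hasDerivAt_const _ B)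
    (fun y hy => hderiv y hy.1) ⟨hx, le_rfl⟩

lemma exists_forall_ge_le_of_deriv_le_neg {c : ℝ} (hf : ∀ x ≥ a, DifferentiableAt ℝ f x)
    (hc : 0 < c) (hderiv : ∀ x ≥ a, B ≤ f x → deriv f x ≤ -c) :
    ∃ T ≥ a, ∀ t ≥ T, f t ≤ B := by
  obtain ⟨T, haT, hT⟩ := exists_le_of_deriv_le_neg hf hc fun x hx hx' => hderiv x hx hx'.le
  refine ⟨T, haT, le_of_deriv_neg_of_eq (fun x hx => hf x (haT.trans hx)) hT fun x hx hx' => ?_⟩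
  linarith [hderiv x (haT.trans hx) hx'.ge]

end Fencing

theorem practical_finite_time_stability_general
    (V : ℝ → ℝ) (η₁ η₂ η₃ h κ : ℝ)
    (hV : Differentiable ℝ V)
    (hη₁ : 0 < η₁) (hη₂ : 0 < η₂) (hη₃ : 0 < η₃)
    (hh0 : 0 < h)
    (hineq : ∀ t ≥ (0 : ℝ),
      deriv V t ≤ -η₁ * V t - η₂ * (V t) ^ ((1 + h) / 2) + η₃)
    (hκ0 : 0 < κ) (hκ1 : κ < 1) :
    ∃ T ≥ (0 : ℝ), ∀ t ≥ T,
      V t ≤ min (η₃ / ((1 - κ) * η₁)) ((η₃ / ((1 - κ) * η₂)) ^ (2 / (1 + h))) := by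
  have h1κ : 0 < 1 - κ := sub_pos.mpr hκ1
  have hc : 0 < κ * η₃ / (1 - κ) := by positivity
  refine exists_forall_ge_le_of_deriv_le_neg (fun x _ => hV x) hc fun t ht hBt => ?_
  rw [← div_div, ← div_div, ← inv_div (1 + h) 2] at hBt
  have hdiss := le_mul_add_mul_rpow_of_min_le (K := η₃ / (1 - κ)) (p := (1 + h) / 2) hη₁ hη₂
    (by positivity) (by positivity) hBt
  have hK : η₃ - η₃ / (1 - κ) = -(κ * η₃ / (1 - κ)) := by field_simp; ring
  linarith [hineq t ht]

theorem practical_finite_time_stability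
    (V : ℝ → ℝ) (η₁ η₂ η₃ h κ : ℝ)
    (hV : Differentiable ℝ V)
    (hnn : ∀ t ≥ (0 : ℝ), 0 ≤ V t)
    (hη₁ : 0 < η₁) (hη₂ : 0 < η₂) (hη₃ : 0 < η₃)
    (hh0 : 0 < h) (hh1 : h < 1)
    (hineq : ∀ t ≥ (0 : ℝ),
      deriv V t ≤ -η₁ * V t - η₂ * (V t) ^ ((1 + h) / 2) + η₃)
    (hκ0 : 0 < κ) (hκ1 : κ < 1) :
    ∃ T ≥ (0 : ℝ), ∀ t ≥ T,
      V t ≤ min (η₃ / ((1 - κ) * η₁)) ((η₃ / ((1 - κ) * η₂)) ^ (2 / (1 + h))) :=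
  practical_finite_time_stability_general V η₁ η₂ η₃ h κ hV hη₁ hη₂ hη₃ hh0 hineq hκ0 hκ1
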